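/- arXiv:1708.03818 — 3 statements merged into one kernel-verified Lean document; each statement's English description precedes it below -/
import Mathlib

section
/- (Uniform convergence of the empirical moment vector; key step in the proof of Theorem 1.) Suppose θ̂_n →P θ* and assumptions (A2)–(A4) hold. Then β ↦ U_0(β, θ*) is continuous on D_β and sup_{β ∈ D_β} ‖U_n(β, θ̂_n) − U_0(β, θ*)‖ converges to 0 in probability as n → ∞. -/
/-!
Around each point `t₀` of the compact set `C = D_β × closedBall θ* δ`, almost sure continuity
and the integrable envelope give, by dominated convergence, a radius `r` and an integrable `φ`
dominating the oscillation of `F(x, ·)` on `C ∩ ball t₀ r` with `∫ φ` as small as we like.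
Finitely many such balls cover `C`, so the law of large numbers at their finitely many centres,
applied both to `F(·, tⱼ)` and to `φⱼ`, controls the empirical deviation uniformly on `C`.
Consistency of `θ̂ₙ` and uniform continuity of the population moment map on `C` then take care of
plugging in `θ̂ₙ`; continuity of `β ↦ U₀(β, θ*)` is dominated convergence.
-/

open MeasureTheory ProbabilityTheory Filter Topology Metric Set

lemma norm_sub_le_two_mul_of_norm_le {M E : Type*} [SeminormedAddCommGroup E] {C : Set M}
    {f : M → E} {b : ℝ} (hb : ∀ t ∈ C, ‖f t‖ ≤ b) {s t : M} (hs : s ∈ C) (ht : t ∈ C) :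
    ‖f s - f t‖ ≤ 2 * b :=
  (norm_sub_le _ _).trans (by linarith [hb s hs, hb t ht])

section Oscillation

variable {M E : Type*} [PseudoMetricSpace M] [SeminormedAddCommGroup E]

/-- The supremum runs over a countable dense `D` rather than over `C` so that it stays measurable
in a parameter of `f`; where `f` is continuous on `C` it still bounds the oscillation over
`C ∩ ball t₀ r` (`norm_sub_le_localOscillation`). -/
noncomputable def localOscillation (D : Set M) (f : M → E) (t₀ : M) (r : ℝ) : ℝ :=
  ⨆ s : ↥(ball t₀ r ∩ D), ‖f s - f t₀‖

variable {C D : Set M} {f : M → E} {t₀ : M} {b : ℝ}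

lemma localOscillation_nonneg (r : ℝ) : 0 ≤ localOscillation D f t₀ r :=
  Real.iSup_nonneg fun _ => norm_nonneg _

lemma localOscillation_le_two_mul (hDC : D ⊆ C) (ht₀ : t₀ ∈ C) (hb : ∀ t ∈ C, ‖f t‖ ≤ b)
    (r : ℝ) : localOscillation D f t₀ r ≤ 2 * b :=
  Real.iSup_le (fun s => norm_sub_le_two_mul_of_norm_le hb (hDC s.2.2) ht₀)
    (by linarith [(norm_nonneg _).trans (hb t₀ ht₀)])

lemma norm_sub_le_localOscillation (hDC : D ⊆ C) (hCD : C ⊆ closure D) (hf : ContinuousOn f C)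
    (ht₀ : t₀ ∈ C) (hb : ∀ t ∈ C, ‖f t‖ ≤ b) {r : ℝ} {s : M} (hs : s ∈ C ∩ ball t₀ r) :
    ‖f s - f t₀‖ ≤ localOscillation D f t₀ r := by
  have hbdd : BddAbove (range fun s : ↥(ball t₀ r ∩ D) => ‖f s - f t₀‖) :=
    ⟨2 * b, forall_mem_range.2 fun s => norm_sub_le_two_mul_of_norm_le hb (hDC s.2.2) ht₀⟩
  refine ContinuousWithinAt.closure_le (isOpen_ball.inter_closure ⟨hs.2, hCD hs.1⟩)
    (((hf s hs.1).mono (inter_subset_right.trans hDC)).sub continuousWithinAt_const).norm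
    continuousWithinAt_const fun y hy => ?_
  exact le_ciSup hbdd ⟨y, hy⟩

lemma tendsto_localOscillation (hDC : D ⊆ C) (hf : ContinuousWithinAt f C t₀) :
    Tendsto (localOscillation D f t₀) (𝓝[>] 0) (𝓝 0) := by
  rw [Metric.tendsto_nhds]
  intro η hη
  obtain ⟨ρ, hρ, hfρ⟩ := Metric.continuousWithinAt_iff.1 hf (η / 2) (half_pos hη)
  filter_upwards [Ioo_mem_nhdsGT hρ] with r hr
  have hosc : localOscillation D f t₀ r ≤ η / 2 :=
    Real.iSup_le (fun s => by
      rw [← dist_eq_norm]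
      exact (hfρ (hDC s.2.2) ((mem_ball.1 s.2.1).trans hr.2)).le) (half_pos hη).le
  rw [Real.dist_eq, sub_zero, abs_of_nonneg (localOscillation_nonneg r)]
  linarith

end Oscillation

section Integral

variable {α M E : Type*} [MeasurableSpace α] {μ : Measure α} [NormedAddCommGroup E]
  {F : α → M → E} {C : Set M} {g : α → ℝ}

lemma integrable_of_norm_le (hF : ∀ t, StronglyMeasurable fun x => F x t) (hg : Integrable g μ)
    (henv : ∀ᵐ x ∂μ, ∀ t ∈ C, ‖F x t‖ ≤ g x) {t : M} (ht : t ∈ C) :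
    Integrable (fun x => F x t) μ :=
  hg.mono' (hF t).aestronglyMeasurable (henv.mono fun _ hx => hx t ht)

theorem exists_integral_localOscillation_le [PseudoMetricSpace M] [NormedSpace ℝ E]
    (hC : TopologicalSpace.IsSeparable C) (hF : ∀ t, StronglyMeasurable fun x => F x t)
    (hcont : ∀ᵐ x ∂μ, ContinuousOn (F x) C)
    (hg : Integrable g μ) (henv : ∀ᵐ x ∂μ, ∀ t ∈ C, ‖F x t‖ ≤ g x) {t₀ : M} (ht₀ : t₀ ∈ C)
    {ε : ℝ} (hε : 0 < ε) :
    ∃ r > 0, ∃ φ : α → ℝ, StronglyMeasurable φ ∧ Integrable φ μ ∧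
      (∀ᵐ x ∂μ, ∀ s ∈ C ∩ ball t₀ r, ‖F x s - F x t₀‖ ≤ φ x) ∧ ∫ x, φ x ∂μ ≤ ε := by
  obtain ⟨D, hDC, hDcount, hCD⟩ := hC.exists_countable_dense_subset
  set φ : ℝ → α → ℝ := fun r x => localOscillation D (F x) t₀ r
  have hφmeas (r : ℝ) : StronglyMeasurable (φ r) := by
    have : Countable ↥(ball t₀ r ∩ D) := (hDcount.mono inter_subset_right).to_subtype
    exact (Measurable.iSup fun s : ↥(ball t₀ r ∩ D) =>
      ((hF s).sub (hF t₀)).norm.measurable).stronglyMeasurable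
  have hφbound (r : ℝ) : ∀ᵐ x ∂μ, ‖φ r x‖ ≤ 2 * g x := by
    filter_upwards [henv] with x hx
    rw [Real.norm_of_nonneg (localOscillation_nonneg r)]
    exact localOscillation_le_two_mul hDC ht₀ hx r
  have hφint (r : ℝ) : Integrable (φ r) μ :=
    (hg.const_mul 2).mono' (hφmeas r).aestronglyMeasurable (hφbound r)
  have hlim : Tendsto (fun r => ∫ x, φ r x ∂μ) (𝓝[>] 0) (𝓝 0) := by
    simpa using tendsto_integral_filter_of_dominated_convergence (fun x => 2 * g x)
      (.of_forall fun r => (hφmeas r).aestronglyMeasurable) (.of_forall hφbound)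
      (hg.const_mul 2) (hcont.mono fun x hx => tendsto_localOscillation hDC (hx t₀ ht₀))
  obtain ⟨r, hrε, hr⟩ := ((hlim.eventually (ge_mem_nhds hε)).and self_mem_nhdsWithin).exists
  refine ⟨r, hr, φ r, hφmeas r, hφint r, ?_, hrε⟩
  filter_upwards [hcont, henv] with x hxc hxg s hs
  exact norm_sub_le_localOscillation hDC hCD hxc ht₀ hxg hs

end Integral

noncomputable def empiricalMean {Ω α E : Type*} [AddCommMonoid E] [Module ℝ E]
    (X : ℕ → Ω → α) (f : α → E) (n : ℕ) (ω : Ω) : E :=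
  (n : ℝ)⁻¹ • ∑ i ∈ Finset.range n, f (X i ω)

section EmpiricalMean

variable {Ω α E : Type*} [NormedAddCommGroup E] [NormedSpace ℝ E] {X : ℕ → Ω → α}

lemma empiricalMean_sub (f g : α → E) (n : ℕ) (ω : Ω) :
    empiricalMean X (fun x => f x - g x) n ω = empiricalMean X f n ω - empiricalMean X g n ω := by
  simp only [empiricalMean, Finset.sum_sub_distrib, smul_sub]

lemma norm_empiricalMean_le {f : α → E} {φ : α → ℝ} {ω : Ω}
    (h : ∀ i, ‖f (X i ω)‖ ≤ φ (X i ω)) (n : ℕ) :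
    ‖empiricalMean X f n ω‖ ≤ empiricalMean X φ n ω := by
  rw [empiricalMean, empiricalMean, norm_smul, norm_inv, Real.norm_natCast, smul_eq_mul]
  gcongr
  exact (norm_sum_le _ _).trans (Finset.sum_le_sum fun i _ => h i)

variable [MeasurableSpace α] {μ : Measure α}

lemma norm_empiricalMean_sub_integral_le {f g : α → E} {φ : α → ℝ} (hf : Integrable f μ)
    (hg : Integrable g μ) (hφ : Integrable φ μ) (hae : ∀ᵐ x ∂μ, ‖f x - g x‖ ≤ φ x) {ω : Ω}
    (hX : ∀ i, ‖f (X i ω) - g (X i ω)‖ ≤ φ (X i ω)) (n : ℕ) :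
    ‖empiricalMean X f n ω - ∫ x, f x ∂μ‖ ≤
      empiricalMean X φ n ω + ‖empiricalMean X g n ω - ∫ x, g x ∂μ‖ + ∫ x, φ x ∂μ := by
  have hmean : ‖empiricalMean X f n ω - empiricalMean X g n ω‖ ≤ empiricalMean X φ n ω := by
    rw [← empiricalMean_sub]
    exact norm_empiricalMean_le hX n
  have hint : ‖∫ x, g x ∂μ - ∫ x, f x ∂μ‖ ≤ ∫ x, φ x ∂μ := by
    rw [norm_sub_rev, ← integral_sub hf hg]
    exact norm_integral_le_of_norm_le hφ hae
  calc ‖empiricalMean X f n ω - ∫ x, f x ∂μ‖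
      = ‖(empiricalMean X f n ω - empiricalMean X g n ω) +
          (empiricalMean X g n ω - ∫ x, g x ∂μ) + (∫ x, g x ∂μ - ∫ x, f x ∂μ)‖ := by abel_nf
    _ ≤ _ := norm_add₃_le.trans (by gcongr)

variable [CompleteSpace E] [MeasurableSpace E] [BorelSpace E] [MeasurableSpace Ω] {P : Measure Ω}
  [IsFiniteMeasure P]

theorem tendstoInMeasure_empiricalMean {f : α → E} (hf : StronglyMeasurable f)
    (hfi : Integrable f μ) (hX : ∀ i, Measurable (X i))
    (hindep : Pairwise fun i j => IndepFun (X i) (X j) P) (hlaw : ∀ i, P.map (X i) = μ) :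
    TendstoInMeasure P (empiricalMean X f) atTop (fun _ => ∫ x, f x ∂μ) := by
  have hident (i : ℕ) : IdentDistrib (fun ω => f (X i ω)) (fun ω => f (X 0 ω)) P P :=
    IdentDistrib.comp ⟨(hX i).aemeasurable, (hX 0).aemeasurable, by rw [hlaw, hlaw]⟩ hf.measurable
  have hint : Integrable (fun ω => f (X 0 ω)) P := by
    rw [← hlaw 0] at hfi
    exact hfi.comp_measurable (hX 0)
  have hmean : ∫ ω, f (X 0 ω) ∂P = ∫ x, f x ∂μ := by
    rw [← hlaw 0, integral_map (hX 0).aemeasurable hf.aestronglyMeasurable]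
  refine tendstoInMeasure_of_tendsto_ae (fun n => ?_) ?_
  · exact (Finset.aestronglyMeasurable_fun_sum _ fun i _ =>
      (hf.comp_measurable (hX i)).aestronglyMeasurable).const_smul _
  · simpa only [hmean, empiricalMean] using strong_law_ae (fun i ω => f (X i ω)) hint
      (fun i j hij => (hindep hij).comp hf.measurable hf.measurable) hident

end EmpiricalMean

lemma tendsto_measure_of_ae_mem_biUnion {Ω ι κ : Type*} [MeasurableSpace Ω] {P : Measure Ω}
    {l : Filter κ} (s : Finset ι) {E : κ → Set Ω} {A : ι → κ → Set Ω}
    (hA : ∀ j ∈ s, Tendsto (fun n => P (A j n)) l (𝓝 0))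
    (hE : ∀ᵐ ω ∂P, ∀ n, ω ∈ E n → ∃ j ∈ s, ω ∈ A j n) :
    Tendsto (fun n => P (E n)) l (𝓝 0) := by
  have hle (n : κ) : P (E n) ≤ ∑ j ∈ s, P (A j n) := by
    refine (measure_mono_ae ?_).trans (measure_biUnion_finset_le s (A · n))
    filter_upwards [hE] with ω hω hωE
    show ω ∈ ⋃ j ∈ s, A j n
    simpa using hω n hωE
  refine tendsto_of_tendsto_of_tendsto_of_le_of_le tendsto_const_nhds ?_ (fun _ => zero_le) hle
  simpa using tendsto_finsetSum s hA

theorem MeasureTheory.TendstoInMeasure.pi {Ω ι κ : Type*} [Fintype ι] {β : ι → Type*}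
    [∀ i, PseudoEMetricSpace (β i)] [MeasurableSpace Ω] {P : Measure Ω} {l : Filter κ}
    {f : κ → Ω → ∀ i, β i} {g : Ω → ∀ i, β i}
    (h : ∀ i, TendstoInMeasure P (fun n ω => f n ω i) l (fun ω => g ω i)) :
    TendstoInMeasure P f l g := by
  intro ε hε
  refine tendsto_measure_of_ae_mem_biUnion Finset.univ (fun i _ => h i ε hε) (.of_forall ?_)
  intro ω n hω
  rwa [mem_ofPred_eq, edist_pi_def, Finset.le_sup_iff hε] at hω

section UniformLaw

variable {Ω α M E : Type*} [MeasurableSpace Ω] {P : Measure Ω} [IsFiniteMeasure P]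
  [MeasurableSpace α] {μ : Measure α} [PseudoMetricSpace M]
  [NormedAddCommGroup E] [NormedSpace ℝ E] [CompleteSpace E] [MeasurableSpace E] [BorelSpace E]

theorem tendsto_measure_exists_lt_norm_empiricalMean_sub_integral {X : ℕ → Ω → α}
    (hX : ∀ i, Measurable (X i)) (hindep : Pairwise fun i j => IndepFun (X i) (X j) P)
    (hlaw : ∀ i, P.map (X i) = μ) {F : α → M → E} {C : Set M} {g : α → ℝ} (hC : IsCompact C)
    (hF : ∀ t, StronglyMeasurable fun x => F x t) (hcont : ∀ᵐ x ∂μ, ContinuousOn (F x) C)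
    (hg : Integrable g μ) (henv : ∀ᵐ x ∂μ, ∀ t ∈ C, ‖F x t‖ ≤ g x) {ε : ℝ} (hε : 0 < ε) :
    Tendsto (fun n => P {ω | ∃ t ∈ C,
      ε < ‖empiricalMean X (fun x => F x t) n ω - ∫ x, F x t ∂μ‖}) atTop (𝓝 0) := by
  have hε4 : 0 < ε / 4 := by positivity
  choose r hr φ hφm hφi hφdom hφε using fun t : C =>
    exists_integral_localOscillation_le hC.isSeparable hF hcont hg henv t.2 hε4
  obtain ⟨T, hT⟩ := hC.elim_finite_subcover (fun t : C => ball (t : M) (r t))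
    (fun _ => isOpen_ball) fun t ht => mem_iUnion.2 ⟨⟨t, ht⟩, mem_ball_self (hr _)⟩
  have hFi {t : M} (ht : t ∈ C) := integrable_of_norm_le hF hg henv ht
  have hgood : ∀ᵐ x ∂μ, ∀ j ∈ T, ∀ s ∈ C ∩ ball (j : M) (r j), ‖F x s - F x j‖ ≤ φ j x :=
    (eventually_all_finset T).2 fun j _ => hφdom j
  have hgood_sample : ∀ᵐ ω ∂P, ∀ i, ∀ j ∈ T, ∀ s ∈ C ∩ ball (j : M) (r j),
      ‖F (X i ω) s - F (X i ω) j‖ ≤ φ j (X i ω) :=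
    ae_all_iff.2 fun i => ae_of_ae_map (hX i).aemeasurable (by rwa [hlaw i])
  refine tendsto_measure_of_ae_mem_biUnion T (A := fun j n =>
    {ω | ε / 4 ≤ dist (empiricalMean X (φ j) n ω) (∫ x, φ j x ∂μ)} ∪
      {ω | ε / 4 ≤ dist (empiricalMean X (fun x => F x j) n ω) (∫ x, F x j ∂μ)})
    (fun j _ => ?_) ?_
  · have h₁ := tendstoInMeasure_iff_dist.1
      (tendstoInMeasure_empiricalMean (hφm j) (hφi j) hX hindep hlaw) _ hε4
    have h₂ := tendstoInMeasure_iff_dist.1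
      (tendstoInMeasure_empiricalMean (hF j) (hFi j.2) hX hindep hlaw) _ hε4
    exact tendsto_of_tendsto_of_tendsto_of_le_of_le tendsto_const_nhds
      (by simpa using h₁.add h₂) (fun _ => zero_le) fun n => measure_union_le _ _
  · filter_upwards [hgood_sample] with ω hω n ⟨t, htC, hdev⟩
    obtain ⟨j, hjT, htj⟩ := mem_iUnion₂.1 (hT htC)
    by_contra! hA
    obtain ⟨hφj, hFj⟩ := not_or.1 (hA j hjT)
    rw [mem_ofPred_eq, not_le, Real.dist_eq, abs_sub_lt_iff] at hφj
    rw [mem_ofPred_eq, not_le, dist_eq_norm] at hFj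
    have hchain := norm_empiricalMean_sub_integral_le (hFi htC) (hFi j.2) (hφi j)
      ((hφdom j).mono fun x hx => hx t ⟨htC, htj⟩) (fun i => hω i j hjT t ⟨htC, htj⟩) n
    linarith [hφε j]

end UniformLaw

theorem tendstoInMeasure_iSup_norm_sub_of_uniform {Ω B Θ E : Type*} [MeasurableSpace Ω]
    {P : Measure Ω} [PseudoMetricSpace B] [PseudoMetricSpace Θ] [SeminormedAddCommGroup E]
    {D : Set B} {N : Set Θ} {θ₀ : Θ} (hN : N ∈ 𝓝 θ₀) {G : ℕ → Ω → B × Θ → E} {H : B × Θ → E}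
    (hH : UniformContinuousOn H (D ×ˢ N))
    (hG : ∀ ε > 0, Tendsto (fun n => P {ω | ∃ t ∈ D ×ˢ N, ε < ‖G n ω t - H t‖}) atTop (𝓝 0))
    {θ : ℕ → Ω → Θ} (hθ : TendstoInMeasure P θ atTop fun _ => θ₀) :
    TendstoInMeasure P (fun n ω => ⨆ β ∈ D, ‖G n ω (β, θ n ω) - H (β, θ₀)‖) atTop
      fun _ => 0 := by
  rw [tendstoInMeasure_iff_dist]
  intro ε hε
  obtain ⟨δ₁, hδ₁, hballN⟩ := Metric.mem_nhds_iff.1 hN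
  obtain ⟨δ₂, hδ₂, hHδ⟩ := Metric.uniformContinuousOn_iff.1 hH (ε / 4) (by positivity)
  have hsub (n : ℕ) : {ω | ε ≤ dist (⨆ β ∈ D, ‖G n ω (β, θ n ω) - H (β, θ₀)‖) 0} ⊆
      {ω | ∃ t ∈ D ×ˢ N, ε / 2 < ‖G n ω t - H t‖} ∪ {ω | min δ₁ δ₂ ≤ dist (θ n ω) θ₀} := by
    intro ω hω
    by_contra! hgood
    simp only [mem_union, mem_ofPred_eq, not_or, not_exists, not_and, not_lt, not_le,
      lt_min_iff] at hgood
    obtain ⟨hGω, hθδ₁, hθδ₂⟩ := hgood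
    have hθN : θ n ω ∈ N := hballN (mem_ball.2 hθδ₁)
    have hβ (β : B) (hβ : β ∈ D) : ‖G n ω (β, θ n ω) - H (β, θ₀)‖ ≤ ε / 2 + ε / 4 := by
      have hdist : dist (β, θ n ω) (β, θ₀) < δ₂ := by
        rwa [Prod.dist_eq, dist_self, max_eq_right dist_nonneg]
      have hHβ := hHδ _ ⟨hβ, hθN⟩ _ ⟨hβ, mem_of_mem_nhds hN⟩ hdist
      rw [dist_eq_norm] at hHβ
      exact (norm_sub_le_norm_sub_add_norm_sub _ (H (β, θ n ω)) _).trans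
        (add_le_add (hGω _ ⟨hβ, hθN⟩) hHβ.le)
    have hsup : ⨆ β ∈ D, ‖G n ω (β, θ n ω) - H (β, θ₀)‖ ≤ ε / 2 + ε / 4 :=
      Real.iSup_le (fun β => Real.iSup_le (hβ β) (by positivity)) (by positivity)
    rw [mem_ofPred_eq, Real.dist_eq, sub_zero,
      abs_of_nonneg (Real.iSup_nonneg fun β => Real.iSup_nonneg fun _ => norm_nonneg _)] at hω
    linarith
  have hlim := (hG (ε / 2) (by positivity)).add
    (tendstoInMeasure_iff_dist.1 hθ (min δ₁ δ₂) (lt_min hδ₁ hδ₂))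
  rw [add_zero] at hlim
  exact tendsto_of_tendsto_of_tendsto_of_le_of_le tendsto_const_nhds hlim (fun _ => zero_le)
    fun n => (measure_mono (hsub n)).trans (measure_union_le _ _)

theorem continuousOn_integral_and_tendstoInMeasure_iSup_empiricalMean {Ω α B Θ E : Type*}
    [MeasurableSpace Ω] {P : Measure Ω} [IsFiniteMeasure P] [MeasurableSpace α] {μ : Measure α}
    [PseudoMetricSpace B] [PseudoMetricSpace Θ] [NormedAddCommGroup E] [NormedSpace ℝ E]
    [CompleteSpace E] [MeasurableSpace E] [BorelSpace E] {X : ℕ → Ω → α}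
    (hX : ∀ i, Measurable (X i)) (hindep : Pairwise fun i j => IndepFun (X i) (X j) P)
    (hlaw : ∀ i, P.map (X i) = μ) {F : α → B × Θ → E} {D : Set B} {N : Set Θ} {θ₀ : Θ}
    (hD : IsCompact D) (hNc : IsCompact N) (hN : N ∈ 𝓝 θ₀)
    (hF : ∀ t, StronglyMeasurable fun x => F x t) (hcont : ∀ᵐ x ∂μ, ContinuousOn (F x) (D ×ˢ N))
    {g : α → ℝ} (hg : Integrable g μ) (henv : ∀ᵐ x ∂μ, ∀ t ∈ D ×ˢ N, ‖F x t‖ ≤ g x)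
    {θ : ℕ → Ω → Θ} (hθ : TendstoInMeasure P θ atTop fun _ => θ₀) :
    ContinuousOn (fun β => ∫ x, F x (β, θ₀) ∂μ) D ∧
      TendstoInMeasure P (fun n ω => ⨆ β ∈ D,
        ‖empiricalMean X (fun x => F x (β, θ n ω)) n ω - ∫ x, F x (β, θ₀) ∂μ‖) atTop
        fun _ => 0 := by
  have hC : IsCompact (D ×ˢ N) := hD.prod hNc
  have hPF : ContinuousOn (fun t => ∫ x, F x t ∂μ) (D ×ˢ N) :=
    continuousOn_of_dominated (fun t _ => (hF t).aestronglyMeasurable)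
      (fun t ht => henv.mono fun x hx => hx t ht) hg hcont
  refine ⟨hPF.comp (f := fun β => (β, θ₀)) (by fun_prop) fun β hβ => ⟨hβ, mem_of_mem_nhds hN⟩, ?_⟩
  exact tendstoInMeasure_iSup_norm_sub_of_uniform hN (hC.uniformContinuousOn_of_continuous hPF)
    (fun ε hε => tendsto_measure_exists_lt_norm_empiricalMean_sub_integral hX hindep hlaw hC hF
      hcont hg henv hε) hθ

section SigmaBlocks

variable {ι Y : Type*} {κ : ι → Type*}
  {V : Y → EuclideanSpace ℝ ((k : ι) × κ k)} {v : ∀ k, Y → EuclideanSpace ℝ (κ k)}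

lemma EuclideanSpace.norm_le_sum_norm_of_sigma [Fintype ι] [∀ k, Fintype (κ k)]
    {w : EuclideanSpace ℝ ((k : ι) × κ k)} {b : ∀ k, EuclideanSpace ℝ (κ k)}
    (h : ∀ ki, w ki = b ki.1 ki.2) : ‖w‖ ≤ ∑ k, ‖b k‖ := by
  have hsq : ‖w‖ ^ 2 = ∑ k, ‖b k‖ ^ 2 := by
    simp only [EuclideanSpace.norm_sq_eq, Fintype.sum_sigma, h]
  refine (pow_le_pow_iff_left₀ (norm_nonneg _) (by positivity) two_ne_zero).1 ?_
  rw [hsq]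
  exact Finset.sum_sq_le_sq_sum_of_nonneg fun k _ => norm_nonneg _

lemma EuclideanSpace.eq_toLp_of_sigma (h : ∀ y ki, V y ki = v ki.1 y ki.2) :
    V = fun y => WithLp.toLp 2 fun ki : (k : ι) × κ k => v ki.1 y ki.2 :=
  funext fun y => PiLp.ext (h y)

lemma EuclideanSpace.measurable_of_sigma [MeasurableSpace Y] (h : ∀ y ki, V y ki = v ki.1 y ki.2)
    (hv : ∀ k, Measurable (v k)) : Measurable V := by
  rw [EuclideanSpace.eq_toLp_of_sigma h]
  exact (WithLp.measurable_toLp _ _).comp (measurable_pi_lambda _ fun ki =>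
    (measurable_pi_apply ki.2).comp ((WithLp.measurable_ofLp _ _).comp (hv ki.1)))

lemma EuclideanSpace.continuousOn_of_sigma [TopologicalSpace Y] {s : Set Y}
    (h : ∀ y ki, V y ki = v ki.1 y ki.2) (hv : ∀ k, ContinuousOn (v k) s) : ContinuousOn V s := by
  rw [EuclideanSpace.eq_toLp_of_sigma h]
  exact (PiLp.continuous_toLp _ _).comp_continuousOn (continuousOn_pi.2 fun ki =>
    (PiLp.continuous_apply _ _ ki.2).comp_continuousOn (hv ki.1))

end SigmaBlocks

theorem gmeta_uniform_convergence_moment_general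
    {Ω : Type} [MeasurableSpace Ω] (P : Measure Ω) [IsProbabilityMeasure P]
    (K p q : ℕ) (d : Fin K → ℕ)
    -- moment functions of the K studies
    (u : (k : Fin K) → EuclideanSpace ℝ (Fin q) → EuclideanSpace ℝ (Fin p) →
      EuclideanSpace ℝ (Fin (d k)) → EuclideanSpace ℝ (Fin (d k)))
    (humeas : ∀ k : Fin K, Measurable (fun xbt :
        EuclideanSpace ℝ (Fin q) × EuclideanSpace ℝ (Fin p) × EuclideanSpace ℝ (Fin (d k)) =>
        u k xbt.1 xbt.2.1 xbt.2.2))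
    -- the i.i.d. reference sample with common law μ
    (μ : Measure (EuclideanSpace ℝ (Fin q)))
    (X : ℕ → Ω → EuclideanSpace ℝ (Fin q))
    (hXmeas : ∀ i, Measurable (X i))
    (hXiid : iIndepFun X P)
    (hXlaw : ∀ i, Measure.map (X i) P = μ)
    -- parameter sets and true values
    (Dβ : Set (EuclideanSpace ℝ (Fin p)))
    (N : (k : Fin K) → Set (EuclideanSpace ℝ (Fin (d k))))
    (θstar : (k : Fin K) → EuclideanSpace ℝ (Fin (d k)))
    (hNopen : ∀ k, IsOpen (N k)) (hNmem : ∀ k, θstar k ∈ N k)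
    -- stacked moment function and its population version
    (U : EuclideanSpace ℝ (Fin q) → EuclideanSpace ℝ (Fin p) →
      ((k : Fin K) → EuclideanSpace ℝ (Fin (d k))) →
      EuclideanSpace ℝ ((k : Fin K) × Fin (d k)))
    (hU : ∀ x β θ (ki : (k : Fin K) × Fin (d k)), U x β θ ki = u ki.1 x β (θ ki.1) ki.2)
    (U₀ : EuclideanSpace ℝ (Fin p) → ((k : Fin K) → EuclideanSpace ℝ (Fin (d k))) →
      EuclideanSpace ℝ ((k : Fin K) × Fin (d k)))
    (hU₀ : ∀ β θ, U₀ β θ = ∫ x, U x β θ ∂μ)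
    -- estimators, independent of the reference sample, converging in probability to θstar
    (θhat : ℕ → Ω → ((k : Fin K) → EuclideanSpace ℝ (Fin (d k))))
    (hθconv : ∀ k, TendstoInMeasure P (fun n ω => θhat n ω k) atTop (fun _ => θstar k))
    -- empirical moment vector
    (Un : ℕ → Ω → EuclideanSpace ℝ (Fin p) → EuclideanSpace ℝ ((k : Fin K) × Fin (d k)))
    (hUn : ∀ n ω β, Un n ω β = (n : ℝ)⁻¹ • ∑ i ∈ Finset.range n, U (X i ω) β (θhat n ω))
    -- (A2): D_β is compact
    (hA2 : IsCompact Dβ)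
    -- (A3): a.s. continuity of the moment functions on D_β × N(θ_k*)
    (hA3 : ∀ k, ∀ᵐ x ∂μ, ContinuousOn
      (fun bt : EuclideanSpace ℝ (Fin p) × EuclideanSpace ℝ (Fin (d k)) => u k x bt.1 bt.2)
      (Dβ ×ˢ N k))
    -- (A4): integrable envelope on D_β × N(θ_k*)
    (hA4 : ∀ k, ∃ g : EuclideanSpace ℝ (Fin q) → ℝ, Integrable g μ ∧
      ∀ᵐ x ∂μ, ∀ β ∈ Dβ, ∀ t ∈ N k, ‖u k x β t‖ ≤ g x) :
    ContinuousOn (fun β => U₀ β θstar) Dβ ∧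
      TendstoInMeasure P (fun n ω => ⨆ β ∈ Dβ, ‖Un n ω β - U₀ β θstar‖) atTop
        (fun _ => (0 : ℝ)) := by
  obtain ⟨δ, hδ, hδN⟩ : ∃ δ > 0, closedBall θstar δ ⊆ Set.univ.pi N :=
    nhds_basis_closedBall.mem_iff.1
      ((isOpen_set_pi finite_univ fun k _ => hNopen k).mem_nhds fun k _ => hNmem k)
  set F : EuclideanSpace ℝ (Fin q) →
      EuclideanSpace ℝ (Fin p) × ((k : Fin K) → EuclideanSpace ℝ (Fin (d k))) →
      EuclideanSpace ℝ ((k : Fin K) × Fin (d k)) := fun x t => U x t.1 t.2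
  have hFmeas (t) : StronglyMeasurable fun x => F x t :=
    (EuclideanSpace.measurable_of_sigma (fun x => hU x t.1 t.2) fun k =>
      (humeas k).comp (f := fun x => (x, t.1, t.2 k)) (by fun_prop)).stronglyMeasurable
  have hFcont : ∀ᵐ x ∂μ, ContinuousOn (F x) (Dβ ×ˢ closedBall θstar δ) := by
    filter_upwards [ae_all_iff.2 hA3] with x hx
    refine EuclideanSpace.continuousOn_of_sigma (V := F x) (v := fun k t => u k x t.1 (t.2 k))
      (fun t => hU x t.1 t.2) fun k => ?_
    exact (hx k).comp
      (continuous_fst.prodMk ((continuous_apply k).comp continuous_snd)).continuousOn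
      fun t (ht : t ∈ Dβ ×ˢ closedBall θstar δ) => ⟨ht.1, hδN ht.2 k trivial⟩
  choose g hg hgenv using hA4
  have hFenv : ∀ᵐ x ∂μ, ∀ t ∈ Dβ ×ˢ closedBall θstar δ, ‖F x t‖ ≤ ∑ k, g k x := by
    filter_upwards [ae_all_iff.2 hgenv] with x hx t ht
    exact (EuclideanSpace.norm_le_sum_norm_of_sigma (hU x t.1 t.2)).trans
      (Finset.sum_le_sum fun k _ => hx k _ ht.1 _ (hδN ht.2 k trivial))
  simp_rw [hUn, hU₀]
  exact continuousOn_integral_and_tendstoInMeasure_iSup_empiricalMean hXmeas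
    (fun i j hij => hXiid.indepFun hij) hXlaw hA2 (isCompact_closedBall _ _)
    (closedBall_mem_nhds θstar hδ) hFmeas hFcont (integrable_finsetSum _ fun k _ => hg k) hFenv
    (TendstoInMeasure.pi hθconv)

/-- **Uniform convergence of the empirical moment vector** (key step in the proof of
Theorem 1 of Tang, Kundu & Chatterjee).  Under (A2)–(A4) and consistency of the study
estimators `θhat n`, the population moment map `β ↦ U₀(β, θ*)` is continuous on `Dβ` and
`sup_{β ∈ Dβ} ‖U_n(β, θ̂_n) − U₀(β, θ*)‖ → 0` in probability. -/
theorem gmeta_uniform_convergence_moment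
    {Ω : Type} [MeasurableSpace Ω] (P : Measure Ω) [IsProbabilityMeasure P]
    (K p q : ℕ) (hK : 1 ≤ K) (d : Fin K → ℕ)
    -- moment functions of the K studies
    (u : (k : Fin K) → EuclideanSpace ℝ (Fin q) → EuclideanSpace ℝ (Fin p) →
      EuclideanSpace ℝ (Fin (d k)) → EuclideanSpace ℝ (Fin (d k)))
    (humeas : ∀ k : Fin K, Measurable (fun xbt :
        EuclideanSpace ℝ (Fin q) × EuclideanSpace ℝ (Fin p) × EuclideanSpace ℝ (Fin (d k)) =>
        u k xbt.1 xbt.2.1 xbt.2.2))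
    -- the i.i.d. reference sample with common law μ
    (μ : Measure (EuclideanSpace ℝ (Fin q))) [IsProbabilityMeasure μ]
    (X : ℕ → Ω → EuclideanSpace ℝ (Fin q))
    (hXmeas : ∀ i, Measurable (X i))
    (hXiid : iIndepFun X P)
    (hXlaw : ∀ i, Measure.map (X i) P = μ)
    -- parameter sets and true values
    (Dβ : Set (EuclideanSpace ℝ (Fin p)))
    (N : (k : Fin K) → Set (EuclideanSpace ℝ (Fin (d k))))
    (θstar : (k : Fin K) → EuclideanSpace ℝ (Fin (d k)))
    (hNopen : ∀ k, IsOpen (N k)) (hNmem : ∀ k, θstar k ∈ N k)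
    -- stacked moment function and its population version
    (U : EuclideanSpace ℝ (Fin q) → EuclideanSpace ℝ (Fin p) →
      ((k : Fin K) → EuclideanSpace ℝ (Fin (d k))) →
      EuclideanSpace ℝ ((k : Fin K) × Fin (d k)))
    (hU : ∀ x β θ (ki : (k : Fin K) × Fin (d k)), U x β θ ki = u ki.1 x β (θ ki.1) ki.2)
    (U₀ : EuclideanSpace ℝ (Fin p) → ((k : Fin K) → EuclideanSpace ℝ (Fin (d k))) →
      EuclideanSpace ℝ ((k : Fin K) × Fin (d k)))
    (hU₀ : ∀ β θ, U₀ β θ = ∫ x, U x β θ ∂μ)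
    -- estimators, independent of the reference sample, converging in probability to θstar
    (θhat : ℕ → Ω → ((k : Fin K) → EuclideanSpace ℝ (Fin (d k))))
    (hθmeas : ∀ n k, Measurable (fun ω => θhat n ω k))
    (hθindep : ∀ n, IndepFun (θhat n) (fun ω i => X i ω) P)
    (hθconv : ∀ k, TendstoInMeasure P (fun n ω => θhat n ω k) atTop (fun _ => θstar k))
    -- empirical moment vector
    (Un : ℕ → Ω → EuclideanSpace ℝ (Fin p) → EuclideanSpace ℝ ((k : Fin K) × Fin (d k)))
    (hUn : ∀ n ω β, Un n ω β = (n : ℝ)⁻¹ • ∑ i ∈ Finset.range n, U (X i ω) β (θhat n ω))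
    -- (A2): D_β is compact
    (hA2 : IsCompact Dβ)
    -- (A3): a.s. continuity of the moment functions on D_β × N(θ_k*)
    (hA3 : ∀ k, ∀ᵐ x ∂μ, ContinuousOn
      (fun bt : EuclideanSpace ℝ (Fin p) × EuclideanSpace ℝ (Fin (d k)) => u k x bt.1 bt.2)
      (Dβ ×ˢ N k))
    -- (A4): integrable envelope on D_β × N(θ_k*)
    (hA4 : ∀ k, ∃ g : EuclideanSpace ℝ (Fin q) → ℝ, Integrable g μ ∧
      ∀ᵐ x ∂μ, ∀ β ∈ Dβ, ∀ t ∈ N k, ‖u k x β t‖ ≤ g x) :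
    ContinuousOn (fun β => U₀ β θstar) Dβ ∧
      TendstoInMeasure P (fun n ω => ⨆ β ∈ Dβ, ‖Un n ω β - U₀ β θstar‖) atTop
        (fun _ => (0 : ℝ)) :=
  gmeta_uniform_convergence_moment_general P K p q d u humeas μ X hXmeas hXiid hXlaw Dβ N θstar
    hNopen hNmem U hU U₀ hU₀ θhat hθconv Un hUn hA2 hA3 hA4
end

section
/- (Optimality of the weighting matrix C_opt = (Δ+Λ)^{-1}.) Let Γ be a d×p real matrix of full column rank p, let V be a d×d symmetric positive definite matrix, and let C be a d×d symmetric positive semi-definite matrix such that ΓᵀCΓ is invertible. Then the matrix (ΓᵀCΓ)^{-1} ΓᵀC V CΓ (ΓᵀCΓ)^{-1} − (Γᵀ V^{-1} Γ)^{-1} is positive semi-definite, and it equals the zero matrix when C = V^{-1}. In particular, the choice C = V^{-1} minimizes the asymptotic covariance matrix (ΓᵀCΓ)^{-1} ΓᵀC V CΓ (ΓᵀCΓ)^{-1} in the Loewner order, with minimal value (Γᵀ V^{-1} Γ)^{-1}. -/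
/-! The GMeta covariance is `G V Gᴴ` for the left inverse `G = (ΓᴴCΓ)⁻¹ΓᴴC` of `Γ`, and this is a
Gauss–Markov argument: `K = (ΓᴴV⁻¹Γ)⁻¹ΓᴴV⁻¹` is the left inverse for `C = V⁻¹`, and for every left
inverse `G` the cross terms `G V Kᴴ`, `K V Gᴴ`, `K V Kᴴ` all equal `(ΓᴴV⁻¹Γ)⁻¹`, so that
`G V Gᴴ - (ΓᴴV⁻¹Γ)⁻¹ = (G - K) V (G - K)ᴴ ⪰ 0`. -/

open Matrix
open scoped ComplexOrder

theorem Matrix.mulVec_injective_of_rank_eq_card {K m n : Type*} [Field K] [Fintype m] [Fintype n]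
    {A : Matrix m n K} (hA : A.rank = Fintype.card n) : Function.Injective A.mulVec := by
  have hker : Module.finrank K (LinearMap.ker A.mulVecLin) = 0 := by
    have := LinearMap.finrank_range_add_finrank_ker A.mulVecLin
    rw [← Matrix.rank, hA, Module.finrank_fintype_fun_eq_card] at this
    omega
  exact LinearMap.ker_eq_bot.mp (Submodule.finrank_eq_zero.mp hker)

section GaussMarkov

variable {𝕜 m n : Type*} [RCLike 𝕜] [Fintype m] [Fintype n] [DecidableEq m] [DecidableEq n]

theorem Matrix.PosSemidef.mul_mul_conjTranspose_sub_inv_of_mul_eq_one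
    {V : Matrix m m 𝕜} (hV : V.PosDef) {Γ : Matrix m n 𝕜} (hB : IsUnit (Γᴴ * V⁻¹ * Γ))
    {G : Matrix n m 𝕜} (hG : G * Γ = 1) :
    (G * V * Gᴴ - (Γᴴ * V⁻¹ * Γ)⁻¹).PosSemidef := by
  set B := Γᴴ * V⁻¹ * Γ
  set K := B⁻¹ * Γᴴ * V⁻¹
  have hVV : V * V⁻¹ = 1 := mul_nonsing_inv V ((isUnit_iff_isUnit_det V).mp hV.isUnit)
  have hBB : B⁻¹ * B = 1 := nonsing_inv_mul B ((isUnit_iff_isUnit_det B).mp hB)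
  have hVinvH : (V⁻¹)ᴴ = V⁻¹ := hV.inv.isHermitian.eq
  have hBinvH : (B⁻¹)ᴴ = B⁻¹ := (isHermitian_conjTranspose_mul_mul Γ hV.inv.isHermitian).inv.eq
  have hKH : Kᴴ = V⁻¹ * Γ * B⁻¹ := by
    simp only [K, conjTranspose_mul, conjTranspose_conjTranspose, hVinvH, hBinvH, Matrix.mul_assoc]
  have hGK : G * V * Kᴴ = B⁻¹ := by
    rw [hKH]
    calc G * V * (V⁻¹ * Γ * B⁻¹) = G * (V * V⁻¹) * Γ * B⁻¹ := by simp only [Matrix.mul_assoc]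
      _ = B⁻¹ := by rw [hVV, Matrix.mul_one, hG, Matrix.one_mul]
  have hKG : K * V * Gᴴ = B⁻¹ := by
    simpa only [conjTranspose_mul, conjTranspose_conjTranspose, hV.isHermitian.eq, hBinvH,
      Matrix.mul_assoc] using congrArg (·ᴴ) hGK
  have hKK : K * V * Kᴴ = B⁻¹ := by
    calc K * V * Kᴴ = B⁻¹ * Γᴴ * V⁻¹ * (V * V⁻¹) * Γ * B⁻¹ := by
          rw [hKH]; simp only [K, Matrix.mul_assoc]
      _ = B⁻¹ * B * B⁻¹ := by rw [hVV, Matrix.mul_one]; simp only [B, Matrix.mul_assoc]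
      _ = B⁻¹ := by rw [hBB, Matrix.one_mul]
  have hsq : (G - K) * V * (G - K)ᴴ = G * V * Gᴴ - B⁻¹ := by
    rw [conjTranspose_sub, Matrix.sub_mul, Matrix.sub_mul, Matrix.mul_sub, Matrix.mul_sub,
      hGK, hKG, hKK]
    abel
  simpa only [hsq] using hV.posSemidef.mul_mul_conjTranspose_same (G - K)

theorem Matrix.PosSemidef.inv_mul_mul_inv_sub_inv
    {V : Matrix m m 𝕜} (hV : V.PosDef) {Γ : Matrix m n 𝕜} (hΓ : Function.Injective Γ.mulVec)
    {C : Matrix m m 𝕜} (hC : C.IsHermitian) (hA : IsUnit (Γᴴ * C * Γ)) :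
    ((Γᴴ * C * Γ)⁻¹ * (Γᴴ * C * V * C * Γ) * (Γᴴ * C * Γ)⁻¹ - (Γᴴ * V⁻¹ * Γ)⁻¹).PosSemidef := by
  set G := (Γᴴ * C * Γ)⁻¹ * Γᴴ * C
  have hG : G * Γ = 1 := by
    simpa only [G, Matrix.mul_assoc] using nonsing_inv_mul _ ((isUnit_iff_isUnit_det _).mp hA)
  have hsandwich : (Γᴴ * C * Γ)⁻¹ * (Γᴴ * C * V * C * Γ) * (Γᴴ * C * Γ)⁻¹ = G * V * Gᴴ := by
    have hAH : ((Γᴴ * C * Γ)⁻¹)ᴴ = (Γᴴ * C * Γ)⁻¹ := (isHermitian_conjTranspose_mul_mul Γ hC).inv.eq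
    rw [conjTranspose_mul, conjTranspose_mul, hC.eq, hAH, conjTranspose_conjTranspose]
    simp only [G, Matrix.mul_assoc]
  rw [hsandwich]
  exact mul_mul_conjTranspose_sub_inv_of_mul_eq_one hV
    (hV.inv.conjTranspose_mul_mul_same hΓ).isUnit hG

theorem Matrix.inv_mul_mul_inv_eq_inv_of_isUnit {V : Matrix m m 𝕜} (hV : IsUnit V)
    {Γ : Matrix m n 𝕜} (hB : IsUnit (Γᴴ * V⁻¹ * Γ)) :
    (Γᴴ * V⁻¹ * Γ)⁻¹ * (Γᴴ * V⁻¹ * V * V⁻¹ * Γ) * (Γᴴ * V⁻¹ * Γ)⁻¹ = (Γᴴ * V⁻¹ * Γ)⁻¹ := by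
  rw [Matrix.mul_assoc (Γᴴ * V⁻¹), mul_nonsing_inv V ((isUnit_iff_isUnit_det V).mp hV),
    Matrix.mul_one, nonsing_inv_mul _ ((isUnit_iff_isUnit_det _).mp hB), Matrix.one_mul]

end GaussMarkov

/-- **Optimality of the weighting matrix `C_opt = (Δ+Λ)⁻¹ = V⁻¹`** in Theorem 1 of
Tang, Kundu & Chatterjee: for any positive semi-definite weighting matrix `C` with `ΓᵀCΓ`
invertible, the asymptotic covariance `(ΓᵀCΓ)⁻¹ ΓᵀC V CΓ (ΓᵀCΓ)⁻¹` dominates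
`(ΓᵀV⁻¹Γ)⁻¹` in the Loewner order, with equality for `C = V⁻¹`. -/
theorem gmeta_optimal_weighting
    (d p : ℕ) (Γ : Matrix (Fin d) (Fin p) ℝ) (hΓ : Γ.rank = p)
    (V : Matrix (Fin d) (Fin d) ℝ) (hV : V.PosDef)
    (C : Matrix (Fin d) (Fin d) ℝ) (hC : C.PosSemidef)
    (hinv : IsUnit (Γᵀ * C * Γ)) :
    Matrix.PosSemidef
      ((Γᵀ * C * Γ)⁻¹ * (Γᵀ * C * V * C * Γ) * (Γᵀ * C * Γ)⁻¹ - (Γᵀ * V⁻¹ * Γ)⁻¹) ∧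
    (C = V⁻¹ →
      (Γᵀ * C * Γ)⁻¹ * (Γᵀ * C * V * C * Γ) * (Γᵀ * C * Γ)⁻¹ = (Γᵀ * V⁻¹ * Γ)⁻¹) := by
  refine ⟨?_, fun hCV => ?_⟩
  · simpa only [conjTranspose_eq_transpose_of_trivial] using
      PosSemidef.inv_mul_mul_inv_sub_inv hV
        (mulVec_injective_of_rank_eq_card (by rwa [Fintype.card_fin])) hC.isHermitian
        (by rwa [conjTranspose_eq_transpose_of_trivial])
  · subst hCV
    simpa only [conjTranspose_eq_transpose_of_trivial] using
      inv_mul_mul_inv_eq_inv_of_isUnit hV.isUnit (by rwa [conjTranspose_eq_transpose_of_trivial])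
end

section
/- (Asymptotic equivalence of GMeta and fixed-effect meta-analysis, equation (4).) Suppose: (i) n_k/n → c_k > 0 for each k = 1,…,K; (ii) for each k, √n(θ̂_{n,k} − β*) is bounded in probability (tight) as n → ∞; (iii) the random matrices Σ̂_{n,k} converge in probability to a common invertible matrix Σ; (iv) the optimally-weighted GMeta estimator β̂_opt admits the expansion √n(β̂_opt − β*) = −M_n · √n U_n(β*, θ̂_n), where M_n converges in probability to M = (Σ_{k=1}^K c_k)^{-1} [c_1 Σ, …, c_K Σ] (a p × Kp block row matrix), and √n U_n(β*, θ̂_n) + (Σ^{-1}√n(θ̂_{n,1} − β*)ᵀ, …, Σ^{-1}√n(θ̂_{n,K} − β*)ᵀ)ᵀ converges to 0 in probability. Define the fixed-effect meta-analysis estimator β̂_meta = (Σ_{k=1}^K (Σ̂_{n,k}/n_k)^{-1})^{-1} Σ_{k=1}^K (Σ̂_{n,k}/n_k)^{-1} θ̂_{n,k}. Then √n(β̂_opt − β̂_meta) converges to 0 in probability; i.e., β̂_opt = β̂_meta + o_p(1/√n). -/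
/-!
Write `Aₙ = (√n (θ̂_{n,k} - β*))_k`, which is bounded in probability, and `B = I_K ⊗ Σ⁻¹`.
Both estimators are, up to `o_P(1)`, the same linear function `Λ Aₙ` of the scaled study errors.
For GMeta, `√n (β̂_opt - β*) = -Mₙ (Uₙ + B Aₙ) + Mₙ B Aₙ`; the first term tends to `M · 0 = 0`,
and `Mₙ B → M B = Λ`. For the meta-analysis estimator, the identity
`√n (β̂_meta - β*) = Wₙ Aₙ` holds exactly once the pooled precision `∑ (n_k/n) Σ̂_k⁻¹` is
invertible (with probability tending to one), and the weights `Wₙ`, a continuous function of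
`(n_k/n, Σ̂_k)_k`, tend to their value at `(c_k, Σ)_k`, which is again `Λ`. A matrix
converging in probability times a vector bounded in probability is `o_P(1)` once its limit is
subtracted, so the two expansions differ by `o_P(1)`.
-/

open MeasureTheory Filter Topology Matrix
open scoped ENNReal Kronecker

section ConvergenceInMeasure

variable {Ω ι E F : Type*} [MeasurableSpace Ω] {μ : Measure Ω} {l : Filter ι}

theorem tendsto_measure_of_subset_union {s t u : ι → Set Ω}
    (hs : Tendsto (fun i => μ (s i)) l (𝓝 0)) (ht : Tendsto (fun i => μ (t i)) l (𝓝 0))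
    (hu : ∀ᶠ i in l, u i ⊆ s i ∪ t i) : Tendsto (fun i => μ (u i)) l (𝓝 0) := by
  refine tendsto_of_tendsto_of_tendsto_of_le_of_le' tendsto_const_nhds
    (by simpa using hs.add ht) (Eventually.of_forall fun _ => zero_le) ?_
  filter_upwards [hu] with i hi using (measure_mono hi).trans (measure_union_le _ _)

theorem tendsto_measure_of_subset_iUnion {κ : Type*} [Fintype κ] {s : κ → ι → Set Ω}
    {u : ι → Set Ω} (hs : ∀ k, Tendsto (fun i => μ (s k i)) l (𝓝 0))
    (hu : ∀ᶠ i in l, u i ⊆ ⋃ k, s k i) : Tendsto (fun i => μ (u i)) l (𝓝 0) := by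
  refine tendsto_of_tendsto_of_tendsto_of_le_of_le' tendsto_const_nhds
    (by simpa using tendsto_finsetSum Finset.univ fun k _ => hs k)
    (Eventually.of_forall fun _ => zero_le) ?_
  filter_upwards [hu] with i hi using (measure_mono hi).trans (measure_iUnion_fintype_le μ _)

/-- Convergence in measure to a constant, phrased with neighbourhoods so that it makes sense
for matrix-valued random variables, which carry a topology but no metric instance. -/
def TendstoInMeasureConst [TopologicalSpace E] (μ : Measure Ω) (X : ι → Ω → E) (l : Filter ι)
    (a : E) : Prop :=
  ∀ U ∈ 𝓝 a, Tendsto (fun i => μ {ω | X i ω ∉ U}) l (𝓝 0)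

theorem tendstoInMeasure_const_iff [PseudoEMetricSpace E] {X : ι → Ω → E} {a : E} :
    TendstoInMeasure μ X l (fun _ => a) ↔ TendstoInMeasureConst μ X l a := by
  refine ⟨fun h U hU => ?_, fun h ε hε => ?_⟩
  · obtain ⟨ε, hε, hεU⟩ := EMetric.mem_nhds_iff.1 hU
    refine tendsto_of_tendsto_of_tendsto_of_le_of_le tendsto_const_nhds (h ε hε)
      (fun _ => zero_le) fun i => measure_mono fun ω hω => ?_
    by_contra hlt
    exact hω (hεU (Metric.mem_eball.2 (not_le.1 hlt)))
  · simpa [Metric.mem_eball, not_lt] using h _ (Metric.eball_mem_nhds a hε)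

section Topological

variable [TopologicalSpace E] [TopologicalSpace F] {X : ι → Ω → E} {a : E}

theorem TendstoInMeasureConst.comp (hX : TendstoInMeasureConst μ X l a) {f : E → F}
    (hf : ContinuousAt f a) : TendstoInMeasureConst μ (fun i ω => f (X i ω)) l (f a) :=
  fun _ hU => hX _ (hf hU)

theorem TendstoInMeasureConst.prodMk (hX : TendstoInMeasureConst μ X l a) {Y : ι → Ω → F}
    {b : F} (hY : TendstoInMeasureConst μ Y l b) :
    TendstoInMeasureConst μ (fun i ω => (X i ω, Y i ω)) l (a, b) := by
  intro U hU
  obtain ⟨V, hV, W, hW, hVW⟩ := mem_nhds_prod_iff.1 hU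
  refine tendsto_measure_of_subset_union (hX V hV) (hY W hW)
    (Eventually.of_forall fun i ω hω => ?_)
  by_contra h
  simp only [Set.mem_union, Set.mem_ofPred_eq, not_or, not_not] at h
  exact hω (hVW ⟨h.1, h.2⟩)

theorem tendstoInMeasureConst_pi {κ : Type*} [Fintype κ] {E : κ → Type*}
    [∀ k, TopologicalSpace (E k)] {X : ι → Ω → ∀ k, E k} {a : ∀ k, E k}
    (h : ∀ k, TendstoInMeasureConst μ (fun i ω => X i ω k) l (a k)) :
    TendstoInMeasureConst μ X l a := by
  intro U hU
  rw [nhds_pi, Filter.mem_pi] at hU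
  obtain ⟨I, -, t, ht, htU⟩ := hU
  refine tendsto_measure_of_subset_iUnion (fun k => h k _ (ht k))
    (Eventually.of_forall fun i ω hω => ?_)
  by_contra h'
  simp only [Set.mem_iUnion, Set.mem_ofPred_eq, not_exists, not_not] at h'
  exact hω (htU fun k _ => h' k)

theorem tendstoInMeasureConst_matrix {m n R : Type*} [Fintype m] [Fintype n] [TopologicalSpace R]
    {X : ι → Ω → Matrix m n R} {A : Matrix m n R}
    (h : ∀ r c, TendstoInMeasureConst μ (fun i ω => X i ω r c) l (A r c)) :
    TendstoInMeasureConst μ X l A :=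
  tendstoInMeasureConst_pi fun r => tendstoInMeasureConst_pi fun c => h r c

theorem tendstoInMeasureConst_sum [AddCommMonoid E] [ContinuousAdd E] {κ : Type*} [Fintype κ]
    {X : κ → ι → Ω → E} {a : κ → E} (h : ∀ k, TendstoInMeasureConst μ (X k) l (a k)) :
    TendstoInMeasureConst μ (fun i ω => ∑ k, X k i ω) l (∑ k, a k) :=
  (tendstoInMeasureConst_pi (X := fun i ω k => X k i ω) h).comp
    (continuous_finsetSum _ fun k _ => continuous_apply k).continuousAt

theorem TendstoInMeasureConst.congr (hX : TendstoInMeasureConst μ X l a) {Y : ι → Ω → E} {b : E}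
    (hXY : ∀ i ω, X i ω = Y i ω) (hab : a = b) : TendstoInMeasureConst μ Y l b := by
  rwa [← hab, ← show X = Y from funext fun i => funext (hXY i)]

theorem tendstoInMeasureConst_of_tendsto {u : ι → E} (hu : Tendsto u l (𝓝 a)) :
    TendstoInMeasureConst μ (fun i _ => u i) l a := by
  intro U hU
  refine tendsto_const_nhds.congr' ?_
  filter_upwards [hu hU] with i hi
  simp [Set.mem_preimage.1 hi]

theorem TendstoInMeasureConst.congr_of_eventually_nhds (hX : TendstoInMeasureConst μ X l a)
    {Y : ι → Ω → E} {V : ι → Ω → F} {v : F} (hV : TendstoInMeasureConst μ V l v) {q : F → Prop}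
    (hq : ∀ᶠ x in 𝓝 v, q x) (hXY : ∀ᶠ i in l, ∀ ω, q (V i ω) → X i ω = Y i ω) :
    TendstoInMeasureConst μ Y l a := by
  intro U hU
  refine tendsto_measure_of_subset_union (hX U hU) (hV _ hq) ?_
  filter_upwards [hXY] with i hi ω hω
  by_cases hqω : q (V i ω)
  · left
    simpa [hi ω hqω] using hω
  · exact Or.inr hqω

end Topological

def BoundedInProbability [Norm E] (μ : Measure Ω) (X : ι → Ω → E) (l : Filter ι) : Prop :=
  ∀ ε : ℝ, 0 < ε → ∃ M : ℝ, ∀ᶠ i in l, μ {ω | M < ‖X i ω‖} ≤ ENNReal.ofReal ε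

theorem BoundedInProbability.mono [Norm E] [Norm F] {X : ι → Ω → E} {Y : ι → Ω → F}
    (hX : BoundedInProbability μ X l) (h : ∀ i ω, ‖Y i ω‖ ≤ ‖X i ω‖) :
    BoundedInProbability μ Y l := fun ε hε =>
  (hX ε hε).imp fun _ hM => hM.mono fun i hi =>
    (measure_mono fun ω hω => lt_of_lt_of_le hω (h i ω)).trans hi

theorem TendstoInMeasureConst.mul_boundedInProbability {R : Type*} [NonUnitalSeminormedRing R]
    {Y X : ι → Ω → R} (hY : TendstoInMeasureConst μ Y l 0) (hX : BoundedInProbability μ X l) :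
    TendstoInMeasureConst μ (fun i ω => Y i ω * X i ω) l 0 := by
  intro U hU
  obtain ⟨ε, hε, hεU⟩ := Metric.mem_nhds_iff.1 hU
  refine ENNReal.tendsto_nhds_zero.2 fun η hη => ?_
  obtain ⟨δ, -, hδ, hδη⟩ := ENNReal.lt_iff_exists_real_btwn.1 hη
  have hδ : 0 < δ / 2 := half_pos (ENNReal.ofReal_pos.1 hδ)
  obtain ⟨M, hM⟩ := hX _ hδ
  have hM' : 0 < max M 1 := lt_max_of_lt_right one_pos
  have hYsmall := ENNReal.tendsto_nhds_zero.1
    (hY _ (Metric.ball_mem_nhds 0 (div_pos hε hM'))) _ (ENNReal.ofReal_pos.2 hδ)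
  filter_upwards [hM, hYsmall] with i hXi hYi
  have hsub : {ω | Y i ω * X i ω ∉ U}
      ⊆ {ω | M < ‖X i ω‖} ∪ {ω | Y i ω ∉ Metric.ball 0 (ε / max M 1)} := by
    intro ω hω
    by_contra h
    simp only [Set.mem_union, Set.mem_ofPred_eq, not_or, not_lt, mem_ball_zero_iff, not_le] at h
    refine hω (hεU (mem_ball_zero_iff.2 ?_))
    calc ‖Y i ω * X i ω‖ ≤ ‖Y i ω‖ * max M 1 :=
          (norm_mul_le _ _).trans (by gcongr; exact h.1.trans (le_max_left _ _))
      _ < ε := (lt_div_iff₀ hM').1 h.2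
  calc μ {ω | Y i ω * X i ω ∉ U}
      ≤ ENNReal.ofReal (δ / 2) + ENNReal.ofReal (δ / 2) :=
        (measure_mono hsub).trans ((measure_union_le _ _).trans (add_le_add hXi hYi))
    _ ≤ η := by rw [← ENNReal.ofReal_add hδ.le hδ.le, add_halves]; exact hδη.le

section MatrixValued

variable {m n o R : Type*} [Fintype m] [Fintype n] [NonUnitalSeminormedRing R]

theorem TendstoInMeasureConst.mulVec_sub_mulVec {W : ι → Ω → Matrix m n R} {W₀ : Matrix m n R}
    (hW : TendstoInMeasureConst μ W l W₀) {X : ι → Ω → n → R}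
    (hX : ∀ c, BoundedInProbability μ (fun i ω => X i ω c) l) :
    TendstoInMeasureConst μ (fun i ω => W i ω *ᵥ X i ω - W₀ *ᵥ X i ω) l 0 := by
  refine tendstoInMeasureConst_pi fun r => ?_
  have hentry : ∀ c, TendstoInMeasureConst μ (fun i ω => W i ω r c - W₀ r c) l 0 := fun c => by
    simpa using hW.comp (f := fun A => A r c - W₀ r c)
      ((continuous_id.matrix_elem r c).sub continuous_const).continuousAt
  simpa [mulVec, dotProduct, sub_mul] using
    tendstoInMeasureConst_sum fun c => (hentry c).mul_boundedInProbability (hX c)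

theorem TendstoInMeasureConst.mulVec_add_mul_mulVec [Fintype o] {Mn : ι → Ω → Matrix m n R}
    {M : Matrix m n R} (hM : TendstoInMeasureConst μ Mn l M) {B : Matrix n o R}
    {Z : ι → Ω → n → R} {X : ι → Ω → o → R}
    (hZ : TendstoInMeasureConst μ (fun i ω => Z i ω + B *ᵥ X i ω) l 0)
    (hX : ∀ c, BoundedInProbability μ (fun i ω => X i ω c) l) :
    TendstoInMeasureConst μ (fun i ω => Mn i ω *ᵥ Z i ω + (M * B) *ᵥ X i ω) l 0 := by
  have hMZ := (hM.prodMk hZ).comp (continuous_fst.matrix_mulVec continuous_snd).continuousAt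
  have hMB := (hM.comp (f := (· * B))
    (continuous_id.matrix_mul continuous_const).continuousAt).mulVec_sub_mulVec hX
  convert (hMZ.prodMk hMB).comp continuous_sub.continuousAt using 2
  · ext ω : 1
    simp only [mulVec_add, mulVec_mulVec]
    abel
  · simp

end MatrixValued

end ConvergenceInMeasure

namespace Matrix

variable {m n p κ R : Type*}

def blockRow (N : κ → Matrix m n R) : Matrix m (κ × n) R :=
  of fun i kj => N kj.1 i kj.2

theorem blockRow_mulVec [Fintype κ] [Fintype n] [NonUnitalNonAssocSemiring R]
    (N : κ → Matrix m n R) (x : κ × n → R) :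
    blockRow N *ᵥ x = ∑ k, N k *ᵥ fun j => x (k, j) := by
  ext i
  simp [blockRow, mulVec, dotProduct, Fintype.sum_prod_type]

theorem blockRow_mul_one_kronecker [Fintype κ] [Fintype n] [DecidableEq κ] [NonAssocSemiring R]
    (N : κ → Matrix m n R) (B : Matrix n p R) :
    blockRow N * ((1 : Matrix κ κ R) ⊗ₖ B) = blockRow fun k => N k * B := by
  ext i ⟨k, j⟩
  simp [blockRow, mul_apply, Fintype.sum_prod_type, one_apply]

theorem one_kronecker_mulVec [Fintype κ] [Fintype n] [DecidableEq κ] [NonAssocSemiring R]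
    (B : Matrix m n R) (x : κ × n → R) :
    ((1 : Matrix κ κ R) ⊗ₖ B) *ᵥ x = fun ki => (B *ᵥ fun j => x (ki.1, j)) ki.2 := by
  ext ⟨k, i⟩
  simp [mulVec, dotProduct, Fintype.sum_prod_type, one_apply]

theorem continuous_blockRow [TopologicalSpace R] :
    Continuous (blockRow : (κ → Matrix m n R) → Matrix m (κ × n) R) :=
  continuous_pi fun i => continuous_pi fun kj => (continuous_apply kj.1).matrix_elem i kj.2

section Field

variable {K : Type*} [Field K] [Fintype n] [DecidableEq n]

/-- Unlike `Matrix.inv_smul`, no invertibility is needed: otherwise both sides are `0`. -/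
theorem inv_smul₀ (r : K) (A : Matrix n n K) : (r • A)⁻¹ = r⁻¹ • A⁻¹ := by
  rcases eq_or_ne r 0 with rfl | hr
  · simp
  by_cases hA : IsUnit A.det
  · exact inv_smul' A (Units.mk0 r hr) hA
  · have hrA : ¬IsUnit (r • A).det := by
      rwa [det_smul, IsUnit.mul_iff, not_and_or, or_iff_right (not_not.2 (hr.isUnit.pow _))]
    rw [nonsing_inv_apply_not_isUnit _ hA, nonsing_inv_apply_not_isUnit _ hrA, smul_zero]

theorem inv_sum_mulVec_sum_sub {ι : Type*} [Fintype ι] (W : ι → Matrix n n K)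
    (hW : IsUnit (∑ k, W k).det) (x : ι → n → K) (β : n → K) :
    (∑ k, W k)⁻¹ *ᵥ ∑ k, W k *ᵥ x k - β = (∑ k, W k)⁻¹ *ᵥ ∑ k, W k *ᵥ (x k - β) := by
  conv_lhs => rw [← one_mulVec β, ← nonsing_inv_mul _ hW, ← mulVec_mulVec, sum_mulVec]
  simp only [mulVec_sub, Finset.sum_sub_distrib]

end Field

section NormedField

variable {ι K : Type*} [NormedField K] [Fintype n] [DecidableEq n]

theorem continuousAt_inv_of_isUnit_det {A : Matrix n n K} (hA : IsUnit A.det) :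
    ContinuousAt Inv.inv A :=
  continuousAt_matrix_inv A (by rw [Ring.inverse_eq_inv']; exact continuousAt_inv₀ hA.ne_zero)

theorem continuousAt_smul_inv_apply {w₀ : ι → K} {S₀ : ι → Matrix n n K} {k : ι}
    (hS : IsUnit (S₀ k).det) :
    ContinuousAt (fun x : (ι → K) × (ι → Matrix n n K) => x.1 k • (x.2 k)⁻¹) (w₀, S₀) :=
  ((continuous_apply k).comp continuous_fst).continuousAt.smul
    ((continuousAt_inv_of_isUnit_det hS).comp_of_eq
      ((continuous_apply k).comp continuous_snd).continuousAt rfl)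

end NormedField

end Matrix

section FixedEffect

variable {ι n K : Type*} [Fintype ι] [Fintype n] [DecidableEq n]

/-- Inverse-variance weighted pooling; `β̂_meta` is the case `V k = Σ̂_{n,k} / n_k`. -/
noncomputable def fixedEffectEstimate [Field K] (V : ι → Matrix n n K) (θ : ι → n → K) :
    n → K :=
  (∑ k, (V k)⁻¹)⁻¹ *ᵥ ∑ k, (V k)⁻¹ *ᵥ θ k

noncomputable def precisionSum [Field K] (w : ι → K) (S : ι → Matrix n n K) : Matrix n n K :=
  ∑ k, w k • (S k)⁻¹

noncomputable def fixedEffectWeights [Field K] (w : ι → K) (S : ι → Matrix n n K) :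
    Matrix n (ι × n) K :=
  blockRow fun k => (precisionSum w S)⁻¹ * (w k • (S k)⁻¹)

theorem fixedEffectEstimate_sub [Field K] {s : K} (hs : s ≠ 0) (N : ι → K)
    (S : ι → Matrix n n K) (hD : IsUnit (precisionSum (fun k => N k / s) S).det)
    (θ : ι → n → K) (β : n → K) :
    fixedEffectEstimate (fun k => (N k)⁻¹ • S k) θ - β =
      fixedEffectWeights (fun k => N k / s) S *ᵥ fun kj => θ kj.1 kj.2 - β kj.2 := by
  set W : ι → Matrix n n K := fun k => (N k / s) • (S k)⁻¹
  have hinv : ∀ k, ((N k)⁻¹ • S k)⁻¹ = s • W k := fun k => by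
    rw [inv_smul₀, inv_inv, smul_smul, mul_div_cancel₀ _ hs]
  simp only [fixedEffectEstimate, hinv, ← Finset.smul_sum, inv_smul₀, smul_mulVec, mulVec_smul,
    smul_smul, mul_inv_cancel₀ hs, one_smul]
  rw [inv_sum_mulVec_sum_sub W hD, fixedEffectWeights, blockRow_mulVec, mulVec_sum]
  simp_rw [mulVec_mulVec]
  rfl

theorem precisionSum_const [Field K] (c : ι → K) (S : Matrix n n K) :
    precisionSum c (fun _ => S) = (∑ k, c k) • S⁻¹ :=
  Finset.sum_smul.symm

theorem isUnit_det_precisionSum_const [Field K] {c : ι → K} (hc : ∑ k, c k ≠ 0)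
    {S : Matrix n n K} (hS : IsUnit S.det) : IsUnit (precisionSum c fun _ => S).det := by
  rw [precisionSum_const, det_smul]
  exact (hc.isUnit.pow _).mul (isUnit_nonsing_inv_det S hS)

/-- The block row on the right is GMeta's limiting matrix `M = (∑ c)⁻¹ [c₁ S, …, c_K S]`:
this is where the two estimators meet. -/
theorem fixedEffectWeights_const [Field K] [DecidableEq ι] (c : ι → K) {S : Matrix n n K}
    (hS : IsUnit S.det) :
    fixedEffectWeights c (fun _ => S) =
      (blockRow fun k => ((∑ l, c l)⁻¹ * c k) • S) * ((1 : Matrix ι ι K) ⊗ₖ S⁻¹) := by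
  simp_rw [blockRow_mul_one_kronecker, fixedEffectWeights, precisionSum_const, inv_smul₀,
    nonsing_inv_nonsing_inv S hS, smul_mul_smul, smul_mul]

variable [NormedField K]

theorem continuousAt_precisionSum {w₀ : ι → K} {S₀ : ι → Matrix n n K}
    (hS : ∀ k, IsUnit (S₀ k).det) :
    ContinuousAt (fun x : (ι → K) × (ι → Matrix n n K) => precisionSum x.1 x.2) (w₀, S₀) :=
  tendsto_finsetSum _ fun _ _ => continuousAt_smul_inv_apply (hS _)

theorem continuousAt_fixedEffectWeights {w₀ : ι → K} {S₀ : ι → Matrix n n K}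
    (hS : ∀ k, IsUnit (S₀ k).det) (hD : IsUnit (precisionSum w₀ S₀).det) :
    ContinuousAt (fun x : (ι → K) × (ι → Matrix n n K) => fixedEffectWeights x.1 x.2)
      (w₀, S₀) :=
  continuous_blockRow.continuousAt.comp <| continuousAt_pi.2 fun _ =>
    ((continuousAt_inv_of_isUnit_det hD).comp_of_eq (continuousAt_precisionSum hS) rfl).mul
      (continuousAt_smul_inv_apply (hS _))

theorem eventually_isUnit_det_precisionSum {w₀ : ι → K} {S₀ : ι → Matrix n n K}
    (hS : ∀ k, IsUnit (S₀ k).det) (hD : IsUnit (precisionSum w₀ S₀).det) :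
    ∀ᶠ x in 𝓝 (w₀, S₀), IsUnit (precisionSum x.1 x.2).det :=
  ((continuous_id.matrix_det.continuousAt.comp_of_eq (continuousAt_precisionSum hS)
    rfl).eventually_ne hD.ne_zero).mono fun _ h => h.isUnit

end FixedEffect

section AsymptoticLinearity

variable {Ω ι n : Type*} [MeasurableSpace Ω] {μ : Measure Ω} [Fintype ι] [Fintype n]
  [DecidableEq n]

theorem tendstoInMeasureConst_sqrt_smul_fixedEffectEstimate_sub {N : ι → ℕ → ℕ} {c : ι → ℝ}
    (hN : ∀ k, Tendsto (fun t => (N k t : ℝ) / t) atTop (𝓝 (c k))) (hc : ∑ k, c k ≠ 0)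
    {S : ℕ → Ω → ι → Matrix n n ℝ} {S₀ : Matrix n n ℝ} (hS₀ : IsUnit S₀.det)
    (hS : ∀ k, TendstoInMeasureConst μ (fun t ω => S t ω k) atTop S₀)
    {θ : ℕ → Ω → ι → n → ℝ} {β : n → ℝ}
    (hθ : ∀ kj : ι × n, BoundedInProbability μ
      (fun (t : ℕ) ω => Real.sqrt t * (θ t ω kj.1 kj.2 - β kj.2)) atTop) :
    TendstoInMeasureConst μ (fun (t : ℕ) ω =>
      Real.sqrt t • (fixedEffectEstimate (fun k => (N k t : ℝ)⁻¹ • S t ω k) (θ t ω) - β)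
        - fixedEffectWeights c (fun _ => S₀) *ᵥ fun kj => Real.sqrt t * (θ t ω kj.1 kj.2 - β kj.2))
      atTop 0 := by
  have hD := isUnit_det_precisionSum_const hc hS₀
  have hX : TendstoInMeasureConst μ (fun t ω => (fun k => (N k t : ℝ) / t, S t ω)) atTop
      (c, fun _ => S₀) :=
    (tendstoInMeasureConst_of_tendsto (tendsto_pi_nhds.2 hN)).prodMk (tendstoInMeasureConst_pi hS)
  refine ((hX.comp (continuousAt_fixedEffectWeights (fun _ => hS₀) hD)).mulVec_sub_mulVec
    hθ).congr_of_eventually_nhds hX (eventually_isUnit_det_precisionSum (fun _ => hS₀) hD) ?_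
  filter_upwards [eventually_ne_atTop 0] with t ht ω hω
  rw [fixedEffectEstimate_sub (Nat.cast_ne_zero.2 ht) _ _ hω, ← mulVec_smul]
  rfl

end AsymptoticLinearity

theorem gmeta_meta_asymptotic_equivalence_general
    {Ω : Type} [MeasurableSpace Ω] (P : Measure Ω)
    (p K : ℕ) (hK : 1 ≤ K)
    (βstar : EuclideanSpace ℝ (Fin p))
    -- the study estimators
    (θhat : ℕ → Ω → Fin K → EuclideanSpace ℝ (Fin p))
    -- (i) study sample sizes with n_k/n → c_k > 0
    (nk : Fin K → ℕ → ℕ) (c : Fin K → ℝ) (hc : ∀ k, 0 < c k)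
    (hnk : ∀ k, Tendsto (fun n => (nk k n : ℝ) / n) atTop (𝓝 (c k)))
    -- (ii) √n (θ̂_{n,k} − β*) is bounded in probability (tight)
    (htight : ∀ k, ∀ ε : ℝ, 0 < ε → ∃ M : ℝ, ∀ᶠ n : ℕ in atTop,
      P {ω | M < ‖(Real.sqrt n) • (θhat n ω k - βstar)‖} ≤ ENNReal.ofReal ε)
    -- (iii) estimated covariance matrices converging in probability to a common invertible Σ
    (Shat : ℕ → Ω → Fin K → Matrix (Fin p) (Fin p) ℝ)
    (Sig : Matrix (Fin p) (Fin p) ℝ) (hSig : IsUnit Sig)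
    (hShatconv : ∀ k i j,
      TendstoInMeasure P (fun n ω => Shat n ω k i j) atTop (fun _ => Sig i j))
    -- (iv) the optimally weighted GMeta estimator admits the expansion
    -- √n(β̂_opt − β*) = −M_n √n U_n(β*, θ̂_n), with M_n →P M and
    -- √n U_n(β*, θ̂_n) + (Σ⁻¹ √n(θ̂_{n,k} − β*))_k →P 0
    (βopt : ℕ → Ω → EuclideanSpace ℝ (Fin p))
    (Mn : ℕ → Ω → Matrix (Fin p) (Fin K × Fin p) ℝ)
    (Zn : ℕ → Ω → (Fin K × Fin p → ℝ))   -- Zn = √n U_n(β*, θ̂_n)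
    (hexp : ∀ (n : ℕ) ω (j : Fin p),
      ((Real.sqrt n) • (βopt n ω - βstar)) j = -((Mn n ω).mulVec (Zn n ω) j))
    (hMn : ∀ (j : Fin p) (ki : Fin K × Fin p),
      TendstoInMeasure P (fun n ω => Mn n ω j ki) atTop
        (fun _ => (∑ k, c k)⁻¹ * (c ki.1 * Sig j ki.2)))
    (hZn : ∀ (k : Fin K) (i : Fin p),
      TendstoInMeasure P
        (fun (n : ℕ) ω => Zn n ω (k, i)
          + ∑ j, Sig⁻¹ i j * (Real.sqrt n * (θhat n ω k j - βstar j)))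
        atTop (fun _ => (0 : ℝ)))
    -- the fixed-effect meta-analysis estimator
    (βmeta : ℕ → Ω → EuclideanSpace ℝ (Fin p))
    (hβmeta : ∀ n ω (j : Fin p), βmeta n ω j =
      ((∑ k, ((nk k n : ℝ)⁻¹ • Shat n ω k)⁻¹)⁻¹).mulVec
        (∑ k, (((nk k n : ℝ)⁻¹ • Shat n ω k)⁻¹).mulVec (fun i => θhat n ω k i)) j) :
    TendstoInMeasure P
      (fun (n : ℕ) ω => (Real.sqrt n) • (βopt n ω - βmeta n ω))
      atTop (fun _ => (0 : EuclideanSpace ℝ (Fin p))) := by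
  have hcsum : ∑ k, c k ≠ 0 := (Finset.sum_pos (fun k _ => hc k) ⟨⟨0, hK⟩, Finset.mem_univ _⟩).ne'
  have hSig' : IsUnit Sig.det := (isUnit_iff_isUnit_det Sig).1 hSig
  set A : ℕ → Ω → Fin K × Fin p → ℝ := fun n ω kj => Real.sqrt n * (θhat n ω kj.1 kj.2 - βstar kj.2)
  set Λ := fixedEffectWeights c fun _ => Sig with hΛ
  have hA : ∀ kj, BoundedInProbability P (fun n ω => A n ω kj) atTop := fun kj =>
    BoundedInProbability.mono (htight kj.1) fun n ω => by
      simpa [A, abs_mul] using PiLp.norm_apply_le (Real.sqrt n • (θhat n ω kj.1 - βstar)) kj.2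
  have hopt : TendstoInMeasureConst P (fun n ω => Mn n ω *ᵥ Zn n ω + Λ *ᵥ A n ω) atTop 0 := by
    rw [hΛ, fixedEffectWeights_const _ hSig']
    refine TendstoInMeasureConst.mulVec_add_mul_mulVec (tendstoInMeasureConst_matrix fun j ki => ?_)
      (tendstoInMeasureConst_pi fun ki => ?_) hA
    · simpa [blockRow, mul_assoc] using tendstoInMeasure_const_iff.1 (hMn j ki)
    · simpa [A, one_kronecker_mulVec, mulVec, dotProduct] using
        tendstoInMeasure_const_iff.1 (hZn ki.1 ki.2)
  have hmeta := tendstoInMeasureConst_sqrt_smul_fixedEffectEstimate_sub hnk hcsum hSig'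
    (fun k => tendstoInMeasureConst_matrix fun i j =>
      tendstoInMeasure_const_iff.1 (hShatconv k i j))
    (θ := fun n ω k => θhat n ω k) (β := βstar) hA
  have hsum := (hopt.prodMk hmeta).comp (f := fun x => WithLp.toLp 2 (-x.1 - x.2))
    ((PiLp.continuous_toLp 2 _).comp (continuous_fst.neg.sub continuous_snd)).continuousAt
  refine tendstoInMeasure_const_iff.2 (hsum.congr (fun n ω => ?_) (by simp))
  ext j
  have h := hexp n ω j
  simp only [PiLp.smul_apply, PiLp.sub_apply, Pi.sub_apply, Pi.add_apply,
    Pi.neg_apply, Pi.smul_apply, smul_eq_mul, hβmeta, fixedEffectEstimate] at h ⊢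
  linarith

/-- **Asymptotic equivalence of GMeta and fixed-effect meta-analysis (equation (4) of
Tang, Kundu & Chatterjee).**  When all reduced models coincide with the maximal model, the
optimally weighted GMeta estimator `β̂_opt` and the fixed-effect meta-analysis estimator
`β̂_meta` satisfy `β̂_opt = β̂_meta + o_P(1/√n)`. -/
theorem gmeta_meta_asymptotic_equivalence
    {Ω : Type} [MeasurableSpace Ω] (P : Measure Ω) [IsProbabilityMeasure P]
    (p K : ℕ) (hK : 1 ≤ K)
    (βstar : EuclideanSpace ℝ (Fin p))
    -- the study estimators
    (θhat : ℕ → Ω → Fin K → EuclideanSpace ℝ (Fin p))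
    (hθmeas : ∀ n k, Measurable (fun ω => θhat n ω k))
    -- (i) study sample sizes with n_k/n → c_k > 0
    (nk : Fin K → ℕ → ℕ) (c : Fin K → ℝ) (hc : ∀ k, 0 < c k)
    (hnk : ∀ k, Tendsto (fun n => (nk k n : ℝ) / n) atTop (𝓝 (c k)))
    -- (ii) √n (θ̂_{n,k} − β*) is bounded in probability (tight)
    (htight : ∀ k, ∀ ε : ℝ, 0 < ε → ∃ M : ℝ, ∀ᶠ n : ℕ in atTop,
      P {ω | M < ‖(Real.sqrt n) • (θhat n ω k - βstar)‖} ≤ ENNReal.ofReal ε)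
    -- (iii) estimated covariance matrices converging in probability to a common invertible Σ
    (Shat : ℕ → Ω → Fin K → Matrix (Fin p) (Fin p) ℝ)
    (hShatmeas : ∀ n k i j, Measurable (fun ω => Shat n ω k i j))
    (Sig : Matrix (Fin p) (Fin p) ℝ) (hSig : IsUnit Sig)
    (hShatconv : ∀ k i j,
      TendstoInMeasure P (fun n ω => Shat n ω k i j) atTop (fun _ => Sig i j))
    -- (iv) the optimally weighted GMeta estimator admits the expansion
    -- √n(β̂_opt − β*) = −M_n √n U_n(β*, θ̂_n), with M_n →P M and
    -- √n U_n(β*, θ̂_n) + (Σ⁻¹ √n(θ̂_{n,k} − β*))_k →P 0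
    (βopt : ℕ → Ω → EuclideanSpace ℝ (Fin p))
    (hβoptmeas : ∀ n, Measurable (βopt n))
    (Mn : ℕ → Ω → Matrix (Fin p) (Fin K × Fin p) ℝ)
    (Zn : ℕ → Ω → (Fin K × Fin p → ℝ))   -- Zn = √n U_n(β*, θ̂_n)
    (hexp : ∀ (n : ℕ) ω (j : Fin p),
      ((Real.sqrt n) • (βopt n ω - βstar)) j = -((Mn n ω).mulVec (Zn n ω) j))
    (hMn : ∀ (j : Fin p) (ki : Fin K × Fin p),
      TendstoInMeasure P (fun n ω => Mn n ω j ki) atTop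
        (fun _ => (∑ k, c k)⁻¹ * (c ki.1 * Sig j ki.2)))
    (hZn : ∀ (k : Fin K) (i : Fin p),
      TendstoInMeasure P
        (fun (n : ℕ) ω => Zn n ω (k, i)
          + ∑ j, Sig⁻¹ i j * (Real.sqrt n * (θhat n ω k j - βstar j)))
        atTop (fun _ => (0 : ℝ)))
    -- the fixed-effect meta-analysis estimator
    (βmeta : ℕ → Ω → EuclideanSpace ℝ (Fin p))
    (hβmeta : ∀ n ω (j : Fin p), βmeta n ω j =
      ((∑ k, ((nk k n : ℝ)⁻¹ • Shat n ω k)⁻¹)⁻¹).mulVec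
        (∑ k, (((nk k n : ℝ)⁻¹ • Shat n ω k)⁻¹).mulVec (fun i => θhat n ω k i)) j) :
    TendstoInMeasure P
      (fun (n : ℕ) ω => (Real.sqrt n) • (βopt n ω - βmeta n ω))
      atTop (fun _ => (0 : EuclideanSpace ℝ (Fin p))) :=
  gmeta_meta_asymptotic_equivalence_general P p K hK βstar θhat nk c hc hnk htight Shat Sig hSig
    hShatconv βopt Mn Zn hexp hMn hZn βmeta hβmeta
end
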